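/- arXiv:2604.05469 — 5 statements merged into one kernel-verified Lean document; each statement's English description precedes it below -/
import Mathlib

section
/- With the setup of the optimal-decoder theorem, the Bayes-optimal loss L_D*(p) = inf_q L_D(p,q) satisfies the exact decomposition L_D*(p) = H(Y|C,W) + E_{c∼D_C}[Σ_x π_x JS_{α_x}({P_w(·|c)}_{w∈C_x})], where (W,C,Y) are jointly distributed with W∼π, C∼D_C independent, Y∼P_W(·|C), and JS_{α_x} is the weighted Jensen–Shannon divergence, i.e. the α_x-weighted average of KL(P_w(·|c)∥P̄_x(·|c)) over w in C_x. -/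
open Finset

/-- Expected next-token cross-entropy of encoding `p` with decoder `q`. -/
noncomputable def crossEntLoss {W C V X : Type} [Fintype W] [Fintype C] [Fintype V]
    (π : W → ℝ) (DC : C → ℝ) (P : W → C → V → ℝ)
    (p : W → X) (q : X → C → V → ℝ) : ℝ :=
  ∑ w, ∑ c, ∑ v, π w * DC c * P w c v * (-(Real.log (q (p w) c v)))

/-- Cell mass of code `x` under prior `π`. -/
noncomputable def cellMass {W X : Type} [Fintype W] [DecidableEq X]
    (π : W → ℝ) (p : W → X) (x : X) : ℝ :=
  ∑ w ∈ Finset.univ.filter (fun w => p w = x), π w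

/-- Cell-average next-token distribution `P̄_x(·|c)`. -/
noncomputable def cellAvg {W C V X : Type} [Fintype W] [DecidableEq X]
    (π : W → ℝ) (P : W → C → V → ℝ) (p : W → X) (x : X) (c : C) (v : V) : ℝ :=
  (∑ w ∈ Finset.univ.filter (fun w => p w = x), π w * P w c v) / cellMass π p x

/-- Kullback–Leibler divergence on a finite set. -/
noncomputable def klDiv {V : Type} [Fintype V] (P Q : V → ℝ) : ℝ :=
  ∑ v, P v * Real.log (P v / Q v)

/-- Conditional entropy `H(Y | C, W)` under `W∼π`, `C∼D_C`, `Y∼P_W(·|C)`. -/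
noncomputable def condEntYCW {W C V : Type} [Fintype W] [Fintype C] [Fintype V]
    (π : W → ℝ) (DC : C → ℝ) (P : W → C → V → ℝ) : ℝ :=
  ∑ w, ∑ c, π w * DC c * (∑ v, -(P w c v * Real.log (P w c v)))

/-- The Jensen–Shannon excess term
`E_{c∼D_C}[ Σ_x π_x JS_{α_x}({P_w(·|c)}_{w∈C_x}) ]`. -/
noncomputable def jsExcess {W C V X : Type} [Fintype W] [Fintype C] [Fintype V] [Fintype X]
    [DecidableEq X] (π : W → ℝ) (DC : C → ℝ) (P : W → C → V → ℝ) (p : W → X) : ℝ :=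
  ∑ c, DC c * ∑ x, cellMass π p x *
    ∑ w ∈ Finset.univ.filter (fun w => p w = x),
      (π w / cellMass π p x) * klDiv (P w c) (cellAvg π P p x c)


section Aux
set_option linter.unusedSectionVars false

variable {W C V X : Type} [Fintype W] [Fintype C] [Fintype V] [Fintype X] [DecidableEq X]

private lemma gibbs' {V : Type} [Fintype V] (P Q : V → ℝ) (hP : ∀ v, 0 ≤ P v)
    (hPs : ∑ v, P v = 1) (hQ : ∀ v, 0 < Q v) (hQs : ∑ v, Q v = 1) :
    0 ≤ ∑ v, P v * Real.log (P v / Q v) := by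
  have key : ∀ v, P v - Q v ≤ P v * Real.log (P v / Q v) := by
    intro v
    rcases eq_or_lt_of_le (hP v) with h | h
    · simp [← h]; exact (hQ v).le
    · have hlog : Real.log (Q v / P v) ≤ Q v / P v - 1 :=
        Real.log_le_sub_one_of_pos (div_pos (hQ v) h)
      have h2 : -(Q v / P v - 1) ≤ -Real.log (Q v / P v) := by linarith
      rw [← Real.log_inv, inv_div] at h2
      have h3 : P v * (-(Q v / P v - 1)) ≤ P v * Real.log (P v / Q v) :=
        mul_le_mul_of_nonneg_left h2 h.le
      have h4 : P v * (-(Q v / P v - 1)) = P v - Q v := by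
        field_simp
        ring
      linarith
  calc (0:ℝ) = ∑ v, (P v - Q v) := by rw [Finset.sum_sub_distrib, hPs, hQs]; ring
    _ ≤ _ := Finset.sum_le_sum fun v _ => key v

private lemma cellMass_pos (π : W → ℝ) (p : W → X) (x : X) (hπpos : ∀ w, 0 < π w)
    (h : (Finset.univ.filter (fun w => p w = x)).Nonempty) : 0 < cellMass π p x :=
  Finset.sum_pos (fun w _ => hπpos w) h

private lemma cellMass_mul_cellAvg (π : W → ℝ) (P : W → C → V → ℝ) (p : W → X) (x : X)
    (c : C) (v : V) (hπpos : ∀ w, 0 < π w) :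
    cellMass π p x * cellAvg π P p x c v =
      ∑ w ∈ Finset.univ.filter (fun w => p w = x), π w * P w c v := by
  rcases (Finset.univ.filter (fun w => p w = x)).eq_empty_or_nonempty with h | h
  · simp [cellAvg, cellMass, h]
  · rw [cellAvg, mul_div_cancel₀ _ (cellMass_pos π p x hπpos h).ne']

private lemma cellAvg_pos (π : W → ℝ) (P : W → C → V → ℝ) (p : W → X) (x : X) (c : C) (v : V)
    (hπpos : ∀ w, 0 < π w) (hPpos : ∀ w c v, 0 < P w c v)
    (h : (Finset.univ.filter (fun w => p w = x)).Nonempty) : 0 < cellAvg π P p x c v :=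
  div_pos (Finset.sum_pos (fun w _ => mul_pos (hπpos w) (hPpos w c v)) h)
    (cellMass_pos π p x hπpos h)

private lemma cellAvg_sum (π : W → ℝ) (P : W → C → V → ℝ) (p : W → X) (x : X) (c : C)
    (hπpos : ∀ w, 0 < π w) (hPsum : ∀ w c, ∑ v, P w c v = 1)
    (h : (Finset.univ.filter (fun w => p w = x)).Nonempty) :
    ∑ v, cellAvg π P p x c v = 1 := by
  have hm := (cellMass_pos π p x hπpos h).ne'
  unfold cellAvg
  rw [← Finset.sum_div, Finset.sum_comm, div_eq_one_iff_eq hm]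
  unfold cellMass
  exact Finset.sum_congr rfl fun w _ => by rw [← Finset.mul_sum, hPsum w c, mul_one]

private lemma CE_canon (π : W → ℝ) (DC : C → ℝ) (P : W → C → V → ℝ) (p : W → X)
    (hπpos : ∀ w, 0 < π w) (q : X → C → V → ℝ) :
    crossEntLoss π DC P p q =
      ∑ c, DC c * ∑ x, cellMass π p x *
        ∑ v, cellAvg π P p x c v * (-(Real.log (q x c v))) := by
  unfold crossEntLoss
  rw [Finset.sum_comm]
  refine Finset.sum_congr rfl fun c _ => ?_
  rw [Finset.mul_sum,
    ← Finset.sum_fiberwise Finset.univ p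
      (fun w => ∑ v, π w * DC c * P w c v * (-(Real.log (q (p w) c v))))]
  refine Finset.sum_congr rfl fun x _ => ?_
  calc ∑ w ∈ Finset.univ.filter (fun w => p w = x),
        ∑ v, π w * DC c * P w c v * (-(Real.log (q (p w) c v)))
      = ∑ w ∈ Finset.univ.filter (fun w => p w = x),
        ∑ v, π w * DC c * P w c v * (-(Real.log (q x c v))) :=
        Finset.sum_congr rfl fun w hw => by rw [(Finset.mem_filter.mp hw).2]
    _ = ∑ v, ∑ w ∈ Finset.univ.filter (fun w => p w = x),
        π w * DC c * P w c v * (-(Real.log (q x c v))) := Finset.sum_comm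
    _ = ∑ v, DC c * ((∑ w ∈ Finset.univ.filter (fun w => p w = x),
        π w * P w c v) * (-(Real.log (q x c v)))) := by
        refine Finset.sum_congr rfl fun v _ => ?_
        rw [Finset.sum_mul, Finset.mul_sum]
        exact Finset.sum_congr rfl fun w _ => by ring
    _ = DC c * (cellMass π p x * ∑ v, cellAvg π P p x c v * (-(Real.log (q x c v)))) := by
        rw [Finset.mul_sum, Finset.mul_sum]
        refine Finset.sum_congr rfl fun v _ => ?_
        rw [← cellMass_mul_cellAvg π P p x c v hπpos]; ring

private lemma T_canon (π : W → ℝ) (DC : C → ℝ) (P : W → C → V → ℝ) (p : W → X)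
    (hπpos : ∀ w, 0 < π w) (hPpos : ∀ w c v, 0 < P w c v) :
    condEntYCW π DC P + jsExcess π DC P p =
      ∑ c, DC c * ∑ x, cellMass π p x *
        ∑ v, cellAvg π P p x c v * (-(Real.log (cellAvg π P p x c v))) := by
  have h1 : condEntYCW π DC P = ∑ c, DC c * ∑ x,
      ∑ w ∈ Finset.univ.filter (fun w => p w = x),
        π w * (∑ v, -(P w c v * Real.log (P w c v))) := by
    unfold condEntYCW
    rw [Finset.sum_comm]
    refine Finset.sum_congr rfl fun c _ => ?_
    rw [← Finset.sum_fiberwise Finset.univ p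
        (fun w => π w * DC c * (∑ v, -(P w c v * Real.log (P w c v)))), Finset.mul_sum]
    refine Finset.sum_congr rfl fun x _ => ?_
    rw [Finset.mul_sum]
    exact Finset.sum_congr rfl fun w _ => by ring
  have h2 : jsExcess π DC P p = ∑ c, DC c * ∑ x,
      ∑ w ∈ Finset.univ.filter (fun w => p w = x),
        π w * klDiv (P w c) (cellAvg π P p x c) := by
    unfold jsExcess
    refine Finset.sum_congr rfl fun c _ => ?_
    congr 1
    refine Finset.sum_congr rfl fun x _ => ?_
    rw [Finset.mul_sum]
    refine Finset.sum_congr rfl fun w hw => ?_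
    have hm : cellMass π p x ≠ 0 := (cellMass_pos π p x hπpos ⟨w, hw⟩).ne'
    field_simp
  rw [h1, h2, ← Finset.sum_add_distrib]
  refine Finset.sum_congr rfl fun c _ => ?_
  rw [← mul_add]
  congr 1
  rw [← Finset.sum_add_distrib]
  refine Finset.sum_congr rfl fun x _ => ?_
  rw [← Finset.sum_add_distrib]
  calc ∑ w ∈ Finset.univ.filter (fun w => p w = x),
        (π w * (∑ v, -(P w c v * Real.log (P w c v))) + π w * klDiv (P w c) (cellAvg π P p x c))
      = ∑ w ∈ Finset.univ.filter (fun w => p w = x),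
        ∑ v, π w * (P w c v * (-(Real.log (cellAvg π P p x c v)))) := by
        refine Finset.sum_congr rfl fun w hw => ?_
        rw [klDiv, ← mul_add, ← Finset.sum_add_distrib, Finset.mul_sum]
        refine Finset.sum_congr rfl fun v _ => ?_
        have hQ : 0 < cellAvg π P p x c v :=
          cellAvg_pos π P p x c v hπpos hPpos ⟨w, hw⟩
        rw [Real.log_div (hPpos w c v).ne' hQ.ne']
        ring
    _ = ∑ v, ∑ w ∈ Finset.univ.filter (fun w => p w = x),
        π w * (P w c v * (-(Real.log (cellAvg π P p x c v)))) := Finset.sum_comm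
    _ = ∑ v, (∑ w ∈ Finset.univ.filter (fun w => p w = x),
        π w * P w c v) * (-(Real.log (cellAvg π P p x c v))) := by
        refine Finset.sum_congr rfl fun v _ => ?_
        rw [Finset.sum_mul]
        exact Finset.sum_congr rfl fun w _ => by ring
    _ = cellMass π p x * ∑ v, cellAvg π P p x c v * (-(Real.log (cellAvg π P p x c v))) := by
        rw [Finset.mul_sum]
        refine Finset.sum_congr rfl fun v _ => ?_
        rw [← cellMass_mul_cellAvg π P p x c v hπpos]
        ring

end Aux

/-- Exact excess-loss decomposition: the Bayes-optimal loss
`L_D*(p) = inf_q L_D(p,q)` equals `H(Y|C,W)` plus the weighted Jensen–Shannon excess term;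
i.e. this value is the least element of the set of losses over full-support decoders. -/

theorem bayes_loss_decomposition {W C V X : Type}
    [Fintype W] [Fintype C] [Fintype V] [Fintype X] [DecidableEq X]
    (π : W → ℝ) (DC : C → ℝ) (P : W → C → V → ℝ)
    (hπpos : ∀ w, 0 < π w) (hπsum : ∑ w, π w = 1)
    (hDCnn : ∀ c, 0 ≤ DC c) (hDCsum : ∑ c, DC c = 1)
    (hPpos : ∀ w c v, 0 < P w c v) (hPsum : ∀ w c, ∑ v, P w c v = 1)
    (p : W → X) :
    IsLeast
      {L : ℝ | ∃ q : X → C → V → ℝ,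
        (∀ x c v, 0 < q x c v) ∧ (∀ x c, ∑ v, q x c v = 1) ∧
        L = crossEntLoss π DC P p q}
      (condEntYCW π DC P + jsExcess π DC P p) := by
  classical
  have hW : Nonempty W := by
    by_contra h
    rw [not_nonempty_iff] at h
    rw [Finset.univ_eq_empty, Finset.sum_empty] at hπsum
    norm_num at hπsum
  obtain ⟨w₀⟩ := hW
  set qs : X → C → V → ℝ := fun x c v =>
    if (Finset.univ.filter (fun w => p w = x)).Nonempty then cellAvg π P p x c v
    else P w₀ c v with hqs
  constructor
  · refine ⟨qs, ?_, ?_, ?_⟩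
    · intro x c v
      by_cases h : (Finset.univ.filter (fun w => p w = x)).Nonempty
      · simp only [hqs, if_pos h]; exact cellAvg_pos π P p x c v hπpos hPpos h
      · simp only [hqs, if_neg h]; exact hPpos w₀ c v
    · intro x c
      by_cases h : (Finset.univ.filter (fun w => p w = x)).Nonempty
      · simp only [hqs, if_pos h]; exact cellAvg_sum π P p x c hπpos hPsum h
      · simp only [hqs, if_neg h]; exact hPsum w₀ c
    · rw [CE_canon π DC P p hπpos qs, T_canon π DC P p hπpos hPpos]
      refine Finset.sum_congr rfl fun c _ => ?_
      congr 1
      refine Finset.sum_congr rfl fun x _ => ?_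
      rcases (Finset.univ.filter (fun w => p w = x)).eq_empty_or_nonempty with h | h
      · have hm : cellMass π p x = 0 := by simp [cellMass, h]
        rw [hm]; ring
      · congr 1
        refine Finset.sum_congr rfl fun v _ => ?_
        simp only [hqs, if_pos h]
  · rintro L ⟨q, hqpos, hqsum, rfl⟩
    rw [CE_canon π DC P p hπpos q, T_canon π DC P p hπpos hPpos]
    refine Finset.sum_le_sum fun c _ => ?_
    refine mul_le_mul_of_nonneg_left ?_ (hDCnn c)
    refine Finset.sum_le_sum fun x _ => ?_
    rcases (Finset.univ.filter (fun w => p w = x)).eq_empty_or_nonempty with h | h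
    · have hm : cellMass π p x = 0 := by simp [cellMass, h]
      rw [hm]; simp
    · refine mul_le_mul_of_nonneg_left ?_ (cellMass_pos π p x hπpos h).le
      have hg := gibbs' (cellAvg π P p x c) (q x c)
        (fun v => (cellAvg_pos π P p x c v hπpos hPpos h).le)
        (cellAvg_sum π P p x c hπpos hPsum h)
        (fun v => hqpos x c v) (hqsum x c)
      have heq : ∑ v, cellAvg π P p x c v * Real.log (cellAvg π P p x c v / q x c v)
          = (∑ v, cellAvg π P p x c v * (-(Real.log (q x c v))))
            - ∑ v, cellAvg π P p x c v * (-(Real.log (cellAvg π P p x c v))) := by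
        rw [← Finset.sum_sub_distrib]
        refine Finset.sum_congr rfl fun v _ => ?_
        rw [Real.log_div (cellAvg_pos π P p x c v hπpos hPpos h).ne' (hqpos x c v).ne']
        ring
      rw [heq] at hg
      linarith
end

section
/- With the setup of the decomposition theorem, the excess loss L_D*(p) − H(Y|C,W) is zero if and only if for every pair w₁, w₂ with p(w₁) = p(w₂), one has P_{w₁}(·|c) = P_{w₂}(·|c) for D_C-almost every context c. In particular, if for every pair of distinct states w₁ ≠ w₂ there exists a context c with D_C(c) > 0 and P_{w₁}(·|c) ≠ P_{w₂}(·|c), then every zero-excess encoding p is injective on W. -/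
open Finset

/-- Bayes-optimal next-token loss `L_D*(p)`: the loss of the Bayes-optimal decoder,
which is the infimum of `L_D(p,q)` over decoders `q`. -/
noncomputable def bayesLoss {W C V X : Type} [Fintype W] [Fintype C] [Fintype V] [DecidableEq X]
    (π : W → ℝ) (DC : C → ℝ) (P : W → C → V → ℝ) (p : W → X) : ℝ :=
  crossEntLoss π DC P p (cellAvg π P p)

private lemma gibbs {V : Type} [Fintype V] (a b : V → ℝ)
    (ha : ∀ v, 0 < a v) (hb : ∀ v, 0 < b v)
    (hsa : ∑ v, a v = 1) (hsb : ∑ v, b v = 1) :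
    0 ≤ ∑ v, a v * (Real.log (a v) - Real.log (b v)) ∧
    ((∑ v, a v * (Real.log (a v) - Real.log (b v))) = 0 → a = b) := by
  have key : ∀ v : V, a v * (Real.log (b v) - Real.log (a v)) ≤ b v - a v := by
    intro v
    have hpos : 0 < b v / a v := div_pos (hb v) (ha v)
    have hlog := Real.log_le_sub_one_of_pos hpos
    have h2 : Real.log (b v) - Real.log (a v) = Real.log (b v / a v) :=
      (Real.log_div (hb v).ne' (ha v).ne').symm
    rw [h2]
    calc a v * Real.log (b v / a v) ≤ a v * (b v / a v - 1) :=
          mul_le_mul_of_nonneg_left hlog (ha v).le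
      _ = b v - a v := by rw [mul_sub, mul_one, ← mul_div_assoc, mul_div_cancel_left₀ _ (ha v).ne']
  have keystrict : ∀ v : V, a v ≠ b v →
      a v * (Real.log (b v) - Real.log (a v)) < b v - a v := by
    intro v hne
    have hpos : 0 < b v / a v := div_pos (hb v) (ha v)
    have hne1 : b v / a v ≠ 1 := by
      intro h
      exact hne ((div_eq_one_iff_eq (ha v).ne').mp h).symm
    have hlog := Real.log_lt_sub_one_of_pos hpos hne1
    have h2 : Real.log (b v) - Real.log (a v) = Real.log (b v / a v) :=
      (Real.log_div (hb v).ne' (ha v).ne').symm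
    rw [h2]
    calc a v * Real.log (b v / a v) < a v * (b v / a v - 1) :=
          (mul_lt_mul_iff_right₀ (ha v)).mpr hlog
      _ = b v - a v := by rw [mul_sub, mul_one, ← mul_div_assoc, mul_div_cancel_left₀ _ (ha v).ne']
  have hsub : ∑ v, (b v - a v) = 0 := by
    rw [Finset.sum_sub_distrib, hsa, hsb]; ring
  have hS : ∑ v, a v * (Real.log (b v) - Real.log (a v)) ≤ 0 := by
    calc ∑ v, a v * (Real.log (b v) - Real.log (a v)) ≤ ∑ v, (b v - a v) :=
          Finset.sum_le_sum (fun v _ => key v)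
      _ = 0 := hsub
  have hzero : (∑ v, a v * (Real.log (a v) - Real.log (b v))) +
      (∑ v, a v * (Real.log (b v) - Real.log (a v))) = 0 := by
    rw [← Finset.sum_add_distrib]
    exact Finset.sum_eq_zero (fun v _ => by ring)
  constructor
  · linarith
  · intro heq
    by_contra hab
    obtain ⟨v₀, hv₀⟩ : ∃ v, a v ≠ b v := by
      by_contra hc; push_neg at hc; exact hab (funext hc)
    have hstrict : ∑ v, a v * (Real.log (b v) - Real.log (a v)) < ∑ v, (b v - a v) :=
      Finset.sum_lt_sum (fun v _ => key v) ⟨v₀, Finset.mem_univ v₀, keystrict v₀ hv₀⟩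
    rw [hsub] at hstrict
    linarith

/-- the excess loss `L_D*(p) − H(Y|C,W)` vanishes iff `p` merges only
pairs whose token laws agree for `D_C`-almost every context; and if `D_C` separates all
points, every zero-excess encoding is injective. -/
theorem zero_excess_iff_veridical {W C V X : Type}
    [Fintype W] [Fintype C] [Fintype V] [DecidableEq X]
    (π : W → ℝ) (DC : C → ℝ) (P : W → C → V → ℝ)
    (hπpos : ∀ w, 0 < π w) (hπsum : ∑ w, π w = 1)
    (hDCnn : ∀ c, 0 ≤ DC c) (hDCsum : ∑ c, DC c = 1)
    (hPpos : ∀ w c v, 0 < P w c v) (hPsum : ∀ w c, ∑ v, P w c v = 1)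
    (p : W → X) :
    (bayesLoss π DC P p - condEntYCW π DC P = 0 ↔
      ∀ w₁ w₂, p w₁ = p w₂ → ∀ c, 0 < DC c → P w₁ c = P w₂ c) ∧
    ((∀ w₁ w₂ : W, w₁ ≠ w₂ → ∃ c, 0 < DC c ∧ P w₁ c ≠ P w₂ c) →
      bayesLoss π DC P p - condEntYCW π DC P = 0 → Function.Injective p) := by

  have hmass : ∀ w : W, 0 < cellMass π p (p w) := by
    intro w
    exact Finset.sum_pos (fun i _ => hπpos i)
      ⟨w, by simp⟩
  have hQpos : ∀ (w : W) c v, 0 < cellAvg π P p (p w) c v := by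
    intro w c v
    apply div_pos _ (hmass w)
    exact Finset.sum_pos (fun i _ => mul_pos (hπpos i) (hPpos i c v)) ⟨w, by simp⟩
  have hQsum : ∀ (w : W) c, ∑ v, cellAvg π P p (p w) c v = 1 := by
    intro w c
    unfold cellAvg
    rw [← Finset.sum_div, Finset.sum_comm]
    have : ∀ w' ∈ Finset.univ.filter (fun w' => p w' = p w),
        ∑ v, π w' * P w' c v = π w' := by
      intro w' _
      rw [← Finset.mul_sum, hPsum w' c, mul_one]
    rw [Finset.sum_congr rfl this]
    exact div_self (hmass w).ne'
  have hident : bayesLoss π DC P p - condEntYCW π DC P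
      = ∑ w, ∑ c, π w * DC c *
        (∑ v, P w c v * (Real.log (P w c v) - Real.log (cellAvg π P p (p w) c v))) := by
    unfold bayesLoss crossEntLoss condEntYCW
    rw [← Finset.sum_sub_distrib]
    refine Finset.sum_congr rfl (fun w _ => ?_)
    rw [← Finset.sum_sub_distrib]
    refine Finset.sum_congr rfl (fun c _ => ?_)
    rw [Finset.mul_sum, Finset.mul_sum, ← Finset.sum_sub_distrib]
    refine Finset.sum_congr rfl (fun v _ => ?_)
    ring
  have hklnn : ∀ (w : W) (c : C),
      0 ≤ ∑ v, P w c v * (Real.log (P w c v) - Real.log (cellAvg π P p (p w) c v)) :=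
    fun w c => (gibbs (P w c) (cellAvg π P p (p w) c) (hPpos w c)
      (hQpos w c) (hPsum w c) (hQsum w c)).1
  have htermnn : ∀ (w : W) (c : C), 0 ≤ π w * DC c *
      (∑ v, P w c v * (Real.log (P w c v) - Real.log (cellAvg π P p (p w) c v))) :=
    fun w c => mul_nonneg (mul_nonneg (hπpos w).le (hDCnn c)) (hklnn w c)
  have main : bayesLoss π DC P p - condEntYCW π DC P = 0 ↔
      ∀ w₁ w₂, p w₁ = p w₂ → ∀ c, 0 < DC c → P w₁ c = P w₂ c := by
    constructor
    · intro hz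
      rw [hident] at hz
      have houter := (Finset.sum_eq_zero_iff_of_nonneg
        (fun w _ => Finset.sum_nonneg (fun c _ => htermnn w c))).mp hz
      have hPQ : ∀ (w : W) (c : C), 0 < DC c → P w c = cellAvg π P p (p w) c := by
        intro w c hc
        have hinner := (Finset.sum_eq_zero_iff_of_nonneg
          (fun c _ => htermnn w c)).mp (houter w (Finset.mem_univ w)) c (Finset.mem_univ c)
        have hkl : (∑ v, P w c v *
            (Real.log (P w c v) - Real.log (cellAvg π P p (p w) c v))) = 0 := by
          have hpdc : 0 < π w * DC c := mul_pos (hπpos w) hc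
          exact (mul_eq_zero.mp hinner).resolve_left hpdc.ne'
        exact (gibbs (P w c) (cellAvg π P p (p w) c) (hPpos w c)
          (hQpos w c) (hPsum w c) (hQsum w c)).2 hkl
      intro w₁ w₂ hp c hc
      rw [hPQ w₁ c hc, hPQ w₂ c hc, hp]
    · intro h
      rw [hident]
      apply Finset.sum_eq_zero
      intro w _
      apply Finset.sum_eq_zero
      intro c _
      by_cases hc : 0 < DC c
      · have hQ : ∀ v, cellAvg π P p (p w) c v = P w c v := by
          intro v
          unfold cellAvg
          have hnum : ∑ w' ∈ Finset.univ.filter (fun w' => p w' = p w), π w' * P w' c v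
              = (cellMass π p (p w)) * P w c v := by
            unfold cellMass
            rw [Finset.sum_mul]
            refine Finset.sum_congr rfl (fun w' hw' => ?_)
            have hpw' : p w' = p w := (Finset.mem_filter.mp hw').2
            rw [h w' w hpw' c hc]
          rw [hnum, mul_comm, mul_div_assoc, div_self (hmass w).ne', mul_one]
        have : ∀ v, P w c v * (Real.log (P w c v) - Real.log (cellAvg π P p (p w) c v)) = 0 := by
          intro v
          rw [hQ v, sub_self, mul_zero]
        rw [Finset.sum_congr rfl (fun v _ => this v), Finset.sum_const_zero, mul_zero]
      · have : DC c = 0 := le_antisymm (not_lt.mp hc) (hDCnn c)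
        rw [this, mul_zero, zero_mul]
  refine ⟨main, ?_⟩
  intro hsep hz w₁ w₂ hp
  by_contra hne
  obtain ⟨c, hc, hPne⟩ := hsep w₁ w₂ hne
  exact hPne (main.mp hz w₁ w₂ hp c hc)
end

section
/- With the setup of the split-gain identity, the complexity-regularized objective J_β(p) = L_D*(p) + β H(p(W)) satisfies J_β(p) − J_β(p') = π_S ( E_{c∼D_C}[JS_λ(P̄_A(·|c), P̄_B(·|c))] − β h(λ) ). Consequently, the refinement p' is strictly preferred to p under J_β if and only if the expected Jensen–Shannon gain E_{c}[JS_λ(P̄_A, P̄_B)] exceeds β h(λ). -/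
open Finset

/-- Two-point weighted Jensen–Shannon divergence. -/
noncomputable def js2 {V : Type} [Fintype V] (l : ℝ) (P Q : V → ℝ) : ℝ :=
  l * klDiv P (fun v => l * P v + (1 - l) * Q v)
    + (1 - l) * klDiv Q (fun v => l * P v + (1 - l) * Q v)

/-- Bayes-optimal next-token loss `L_D*(p) = H(Y | C, p(W))`. -/
noncomputable def bayesOptLoss {W C V X : Type}
    [Fintype W] [Fintype C] [Fintype V] [Fintype X] [DecidableEq X]
    (π : W → ℝ) (DC : C → ℝ) (P : W → C → V → ℝ) (p : W → X) : ℝ :=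
  ∑ c, DC c * ∑ x, ∑ v,
    -((∑ w ∈ Finset.univ.filter (fun w => p w = x), π w * P w c v) *
      Real.log ((∑ w ∈ Finset.univ.filter (fun w => p w = x), π w * P w c v) /
        (∑ w ∈ Finset.univ.filter (fun w => p w = x), π w)))

/-- `π`-weighted average token law over a finite subset of world states. -/
noncomputable def avgOn {W C V : Type} [Fintype W]
    (π : W → ℝ) (P : W → C → V → ℝ) (s : Finset W) (c : C) (v : V) : ℝ :=
  (∑ w ∈ s, π w * P w c v) / ∑ w ∈ s, π w

/-- Entropy of the partition induced by a map `p`. -/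
noncomputable def partitionEntropy {W X : Type} [Fintype W] [Fintype X] [DecidableEq X]
    (π : W → ℝ) (p : W → X) : ℝ :=
  ∑ x, Real.negMulLog (∑ w ∈ Finset.univ.filter (fun w => p w = x), π w)

/-- Binary entropy. -/
noncomputable def binEnt (l : ℝ) : ℝ := Real.negMulLog l + Real.negMulLog (1 - l)

/-- Complexity-regularized objective `J_β(p) = L_D*(p) + β H(p(W))`. -/
noncomputable def Jreg {W C V X : Type}
    [Fintype W] [Fintype C] [Fintype V] [Fintype X] [DecidableEq X]
    (π : W → ℝ) (DC : C → ℝ) (P : W → C → V → ℝ) (β : ℝ) (p : W → X) : ℝ :=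
  bayesOptLoss π DC P p + β * partitionEntropy π p


lemma sum_refined {W X : Type} [Fintype W] [DecidableEq W] [Fintype X] [DecidableEq X]
    (p : W → X) (x₀ : X) (A B : Finset W) (hdisj : Disjoint A B)
    (hcell : A ∪ B = Finset.univ.filter (fun w => p w = x₀))
    (F : Finset W → ℝ) (hF : F ∅ = 0) :
    ∑ y : X × Bool, F (Finset.univ.filter (fun w => (p w, decide (w ∈ A)) = y))
      = F A + F B - F (A ∪ B) + ∑ x, F (Finset.univ.filter (fun w => p w = x)) := by
  have hpA : ∀ w ∈ A, p w = x₀ := by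
    intro w hw
    have : w ∈ A ∪ B := Finset.mem_union_left _ hw
    rw [hcell] at this; exact (Finset.mem_filter.mp this).2
  have hpB : ∀ w ∈ B, p w = x₀ := by
    intro w hw
    have : w ∈ A ∪ B := Finset.mem_union_right _ hw
    rw [hcell] at this; exact (Finset.mem_filter.mp this).2
  rw [Fintype.sum_prod_type]
  have key : ∀ x : X,
      (∑ b : Bool, F (Finset.univ.filter (fun w => (p w, decide (w ∈ A)) = (x, b))))
        = (if x = x₀ then F A + F B - F (A ∪ B) else 0)
          + F (Finset.univ.filter (fun w => p w = x)) := by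
    intro x
    rw [Fintype.sum_bool]
    by_cases hx : x = x₀
    · subst hx
      have hT : Finset.univ.filter (fun w => (p w, decide (w ∈ A)) = (x, true)) = A := by
        ext w
        simp only [Finset.mem_filter, Finset.mem_univ, true_and, Prod.mk.injEq,
          decide_eq_true_eq]
        exact ⟨fun h => h.2, fun h => ⟨hpA w h, h⟩⟩
      have hFcell : Finset.univ.filter (fun w => (p w, decide (w ∈ A)) = (x, false)) = B := by
        ext w
        simp only [Finset.mem_filter, Finset.mem_univ, true_and, Prod.mk.injEq,
          decide_eq_false_iff_not]
        constructor
        · rintro ⟨h1, h2⟩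
          have : w ∈ A ∪ B := by rw [hcell]; simp [h1]
          rcases Finset.mem_union.mp this with h | h
          · exact absurd h h2
          · exact h
        · intro h
          exact ⟨hpB w h, fun hwA => (Finset.disjoint_left.mp hdisj hwA) h⟩
      rw [hT, hFcell, ← hcell, if_pos rfl]
      ring
    · have hT : Finset.univ.filter (fun w => (p w, decide (w ∈ A)) = (x, true)) = ∅ := by
        ext w
        simp only [Finset.mem_filter, Finset.mem_univ, true_and, Prod.mk.injEq,
          decide_eq_true_eq, Finset.notMem_empty, iff_false, not_and]
        intro h1 h2
        exact hx ((h1 ▸ hpA w h2 : x = x₀))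
      have hFcell : Finset.univ.filter (fun w => (p w, decide (w ∈ A)) = (x, false))
          = Finset.univ.filter (fun w => p w = x) := by
        ext w
        simp only [Finset.mem_filter, Finset.mem_univ, true_and, Prod.mk.injEq,
          decide_eq_false_iff_not]
        constructor
        · rintro ⟨h1, _⟩; exact h1
        · intro h1
          refine ⟨h1, fun hwA => hx ?_⟩
          rw [← h1, hpA w hwA]
      rw [hT, hFcell, hF, if_neg hx]
  rw [Finset.sum_congr rfl (fun x _ => key x), Finset.sum_add_distrib,
    Finset.sum_ite_eq' Finset.univ x₀ _]
  simp

lemma ent_split (a b : ℝ) (ha : 0 < a) (hb : 0 < b) :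
    Real.negMulLog (a + b) - Real.negMulLog a - Real.negMulLog b
      = -((a + b) * (Real.negMulLog (a / (a + b)) + Real.negMulLog (1 - a / (a + b)))) := by
  have hs : 0 < a + b := by linarith
  have h1 : 1 - a / (a + b) = b / (a + b) := by field_simp; ring
  rw [h1]
  simp only [Real.negMulLog, Real.log_div ha.ne' hs.ne', Real.log_div hb.ne' hs.ne']
  field_simp
  ring
lemma js_split {V : Type} [Fintype V] (a b : ℝ) (ha : 0 < a) (hb : 0 < b)
    (f g : V → ℝ) (hf : ∀ v, 0 < f v) (hg : ∀ v, 0 < g v) :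
    (∑ v, -((f v + g v) * Real.log ((f v + g v) / (a + b))))
      - (∑ v, -(f v * Real.log (f v / a)))
      - (∑ v, -(g v * Real.log (g v / b)))
    = (a + b) * js2 (a / (a + b)) (fun v => f v / a) (fun v => g v / b) := by
  have hs : 0 < a + b := by linarith
  have hmix : ∀ v, (a / (a + b)) * (f v / a) + (1 - a / (a + b)) * (g v / b)
      = (f v + g v) / (a + b) := by
    intro v; field_simp; ring
  simp only [js2, klDiv, hmix]
  rw [← Finset.sum_sub_distrib, ← Finset.sum_sub_distrib, mul_add, Finset.mul_sum,
    Finset.mul_sum, Finset.mul_sum, Finset.mul_sum, ← Finset.sum_add_distrib]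
  refine Finset.sum_congr rfl (fun v _ => ?_)
  have hfv := hf v; have hgv := hg v
  have hfgv : 0 < f v + g v := by linarith
  rw [Real.log_div (div_pos hfv ha).ne' (div_pos hfgv hs).ne',
    Real.log_div (div_pos hgv hb).ne' (div_pos hfgv hs).ne']
  field_simp
  ring

/-- split-versus-merge threshold:
`J_β(p) − J_β(p^{A|B}) = π_S (E_c[JS_λ(P̄_A, P̄_B)] − β h(λ))`, and the refinement is
strictly preferred iff the expected Jensen–Shannon gain exceeds `β h(λ)`. -/
theorem split_merge_threshold {W C V X : Type}
    [Fintype W] [DecidableEq W] [Fintype C] [Fintype V] [Fintype X] [DecidableEq X]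
    (π : W → ℝ) (DC : C → ℝ) (P : W → C → V → ℝ) (β : ℝ) (hβ : 0 ≤ β)
    (hπpos : ∀ w, 0 < π w) (hπsum : ∑ w, π w = 1)
    (hDCnn : ∀ c, 0 ≤ DC c) (hDCsum : ∑ c, DC c = 1)
    (hPpos : ∀ w c v, 0 < P w c v) (hPsum : ∀ w c, ∑ v, P w c v = 1)
    (p : W → X) (x₀ : X) (A B : Finset W)
    (hA : A.Nonempty) (hB : B.Nonempty) (hdisj : Disjoint A B)
    (hcell : A ∪ B = Finset.univ.filter (fun w => p w = x₀)) :
    (Jreg π DC P β p - Jreg π DC P β (fun w => (p w, decide (w ∈ A)))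
      = (∑ w ∈ A ∪ B, π w) *
        ((∑ c, DC c *
            js2 ((∑ w ∈ A, π w) / ∑ w ∈ A ∪ B, π w)
              (avgOn π P A c) (avgOn π P B c))
          - β * binEnt ((∑ w ∈ A, π w) / ∑ w ∈ A ∪ B, π w))) ∧
    (Jreg π DC P β (fun w => (p w, decide (w ∈ A))) < Jreg π DC P β p ↔
      β * binEnt ((∑ w ∈ A, π w) / ∑ w ∈ A ∪ B, π w)
        < ∑ c, DC c *
            js2 ((∑ w ∈ A, π w) / ∑ w ∈ A ∪ B, π w)
              (avgOn π P A c) (avgOn π P B c)) := by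
  have hπA : 0 < ∑ w ∈ A, π w := Finset.sum_pos (fun w _ => hπpos w) hA
  have hπB : 0 < ∑ w ∈ B, π w := Finset.sum_pos (fun w _ => hπpos w) hB
  have hAB : ∑ w ∈ A ∪ B, π w = (∑ w ∈ A, π w) + ∑ w ∈ B, π w :=
    Finset.sum_union hdisj
  have hπS : 0 < ∑ w ∈ A ∪ B, π w := by rw [hAB]; linarith
  set πA := ∑ w ∈ A, π w with hπAdef
  set πB := ∑ w ∈ B, π w with hπBdef
  set πS := ∑ w ∈ A ∪ B, π w with hπSdef
  set lam := πA / πS with hlamdef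
  set E := ∑ c, DC c * js2 lam (avgOn π P A c) (avgOn π P B c) with hEdef
  -- entropy difference
  have hH : partitionEntropy π (fun w => (p w, decide (w ∈ A)))
      = Real.negMulLog πA + Real.negMulLog πB - Real.negMulLog πS
        + partitionEntropy π p :=
    sum_refined p x₀ A B hdisj hcell (fun s => Real.negMulLog (∑ w ∈ s, π w))
      (by simp [Real.negMulLog])
  have hHdiff : partitionEntropy π p - partitionEntropy π (fun w => (p w, decide (w ∈ A)))
      = -(πS * binEnt lam) := by
    have := ent_split πA πB hπA hπB
    rw [← hAB] at this
    rw [hH]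
    have hbe : binEnt lam = Real.negMulLog (πA / πS) + Real.negMulLog (1 - πA / πS) := rfl
    rw [hbe]
    linarith [this]
  -- loss difference
  have hG : ∀ c : C, (∑ v, -((∑ w ∈ A ∪ B, π w * P w c v) *
        Real.log ((∑ w ∈ A ∪ B, π w * P w c v) / πS)))
      - (∑ v, -((∑ w ∈ A, π w * P w c v) *
        Real.log ((∑ w ∈ A, π w * P w c v) / πA)))
      - (∑ v, -((∑ w ∈ B, π w * P w c v) *
        Real.log ((∑ w ∈ B, π w * P w c v) / πB)))
      = πS * js2 lam (avgOn π P A c) (avgOn π P B c) := by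
    intro c
    have hf : ∀ v, 0 < ∑ w ∈ A, π w * P w c v :=
      fun v => Finset.sum_pos (fun w _ => mul_pos (hπpos w) (hPpos w c v)) hA
    have hg : ∀ v, 0 < ∑ w ∈ B, π w * P w c v :=
      fun v => Finset.sum_pos (fun w _ => mul_pos (hπpos w) (hPpos w c v)) hB
    have hjs := js_split πA πB hπA hπB
      (fun v => ∑ w ∈ A, π w * P w c v) (fun v => ∑ w ∈ B, π w * P w c v) hf hg
    have hsum : ∀ v, ∑ w ∈ A ∪ B, π w * P w c v
        = (∑ w ∈ A, π w * P w c v) + ∑ w ∈ B, π w * P w c v :=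
      fun v => Finset.sum_union hdisj
    have havgA : avgOn π P A c = fun v => (∑ w ∈ A, π w * P w c v) / πA := rfl
    have havgB : avgOn π P B c = fun v => (∑ w ∈ B, π w * P w c v) / πB := rfl
    simp only [hsum, havgA, havgB, hlamdef, hAB]
    exact hjs
  have hL : bayesOptLoss π DC P (fun w => (p w, decide (w ∈ A)))
      = ∑ c, DC c *
        ((∑ v, -((∑ w ∈ A, π w * P w c v) *
            Real.log ((∑ w ∈ A, π w * P w c v) / πA)))
          + (∑ v, -((∑ w ∈ B, π w * P w c v) *
            Real.log ((∑ w ∈ B, π w * P w c v) / πB)))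
          - (∑ v, -((∑ w ∈ A ∪ B, π w * P w c v) *
            Real.log ((∑ w ∈ A ∪ B, π w * P w c v) / πS)))
          + ∑ x, ∑ v,
            -((∑ w ∈ Finset.univ.filter (fun w => p w = x), π w * P w c v) *
              Real.log ((∑ w ∈ Finset.univ.filter (fun w => p w = x), π w * P w c v) /
                (∑ w ∈ Finset.univ.filter (fun w => p w = x), π w)))) := by
    unfold bayesOptLoss
    refine Finset.sum_congr rfl (fun c _ => ?_)
    congr 1
    exact sum_refined p x₀ A B hdisj hcell
      (fun s => ∑ v, -((∑ w ∈ s, π w * P w c v) *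
        Real.log ((∑ w ∈ s, π w * P w c v) / (∑ w ∈ s, π w)))) (by simp)
  have hLdiff : bayesOptLoss π DC P p
      - bayesOptLoss π DC P (fun w => (p w, decide (w ∈ A))) = πS * E := by
    rw [hL, hEdef]
    unfold bayesOptLoss
    rw [← Finset.sum_sub_distrib, Finset.mul_sum]
    refine Finset.sum_congr rfl (fun c _ => ?_)
    linear_combination DC c * hG c
  have hkey : Jreg π DC P β p - Jreg π DC P β (fun w => (p w, decide (w ∈ A)))
      = πS * (E - β * binEnt lam) := by
    unfold Jreg
    linear_combination hLdiff + β * hHdiff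
  refine ⟨hkey, ?_⟩
  rw [← sub_pos, hkey]
  constructor
  · intro h
    by_contra hc
    push_neg at hc
    nlinarith
  · intro h
    have h2 : 0 < E - β * binEnt lam := by linarith
    exact mul_pos hπS h2
end

section
/- Let p* be the encoding whose partition is exactly the quotient by an equivalence relation ∼_μ under which states within the same class have identical token laws P_w(·|c) for D_C-almost every c. Then for every β ≥ 0, every one-step split of a cell of p* changes the Bayes-optimal loss by zero and weakly increases J_β, i.e. p* is split-stable; and p* is a local minimum of J_β on the partition lattice (with respect to one-step splits and merges) if and only if β ≤ β_min, where β_min is the minimum over pairs of distinct classes C₁ ≠ C₂ of E_{c∼D_C}[JS_λ(P̄_{C₁}(·|c), P̄_{C₂}(·|c))] / h(λ) with λ = π(C₁)/(π(C₁)+π(C₂)). -/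
open Finset

/-- The equivalence class of `x : Quotient s` as a finset. -/
noncomputable def cls {W : Type} [Fintype W] (s : Setoid W) [DecidableEq (Quotient s)]
    (x : Quotient s) : Finset W :=
  Finset.univ.filter (fun w => Quotient.mk s w = x)

set_option linter.unusedSectionVars false


noncomputable def cellLoss {W C V : Type} [Fintype W] [Fintype V]
    (π : W → ℝ) (P : W → C → V → ℝ) (S : Finset W) (c : C) : ℝ :=
  ∑ v, -((∑ w ∈ S, π w * P w c v) *
    Real.log ((∑ w ∈ S, π w * P w c v) / (∑ w ∈ S, π w)))

section Helpers
variable {W C V : Type} [Fintype W] [DecidableEq W] [Fintype C] [Fintype V]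
variable (π : W → ℝ) (P : W → C → V → ℝ)

lemma cellLoss_empty (c : C) : cellLoss π P (∅ : Finset W) c = 0 := by
  simp [cellLoss]

lemma cellLoss_split (hπpos : ∀ w, 0 < π w) (A B : Finset W)
    (hA : A.Nonempty) (hB : B.Nonempty) (hd : Disjoint A B) (c : C) (f : V → ℝ)
    (hf : ∀ w ∈ A ∪ B, P w c = f) :
    cellLoss π P A c + cellLoss π P B c = cellLoss π P (A ∪ B) c := by
  have hMA : 0 < ∑ w ∈ A, π w := Finset.sum_pos (fun w _ => hπpos w) hA
  have hMB : 0 < ∑ w ∈ B, π w := Finset.sum_pos (fun w _ => hπpos w) hB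
  have key : ∀ (S : Finset W), S ⊆ A ∪ B → (0 : ℝ) < ∑ w ∈ S, π w →
      cellLoss π P S c = (∑ w ∈ S, π w) * ∑ v, -(f v * Real.log (f v)) := by
    intro S hS hM
    unfold cellLoss
    rw [Finset.mul_sum]
    refine Finset.sum_congr rfl fun v _ => ?_
    have hm : (∑ w ∈ S, π w * P w c v) = (∑ w ∈ S, π w) * f v := by
      rw [Finset.sum_mul]
      exact Finset.sum_congr rfl fun w hw => by rw [hf w (hS hw)]
    rw [hm, mul_div_cancel_left₀ _ (ne_of_gt hM)]
    ring
  rw [key A Finset.subset_union_left hMA, key B Finset.subset_union_right hMB,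
    key (A ∪ B) (subset_refl _) (by rw [Finset.sum_union hd]; positivity),
    Finset.sum_union hd, add_mul]

lemma cellLoss_merge (hπpos : ∀ w, 0 < π w) (hPpos : ∀ w c v, 0 < P w c v)
    (S T : Finset W) (hS : S.Nonempty) (hT : T.Nonempty) (hd : Disjoint S T) (c : C) :
    cellLoss π P (S ∪ T) c = cellLoss π P S c + cellLoss π P T c +
      ((∑ w ∈ S, π w) + ∑ w ∈ T, π w) *
        js2 ((∑ w ∈ S, π w) / ((∑ w ∈ S, π w) + ∑ w ∈ T, π w))
          (avgOn π P S c) (avgOn π P T c) := by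
  have hMS : 0 < ∑ w ∈ S, π w := Finset.sum_pos (fun w _ => hπpos w) hS
  have hMT : 0 < ∑ w ∈ T, π w := Finset.sum_pos (fun w _ => hπpos w) hT
  set MS := ∑ w ∈ S, π w
  set MT := ∑ w ∈ T, π w
  have hM : 0 < MS + MT := by positivity
  have h1l : 1 - MS / (MS + MT) = MT / (MS + MT) := by field_simp; ring
  unfold cellLoss js2 klDiv avgOn
  rw [h1l]
  simp only [Finset.mul_sum, mul_add, ← Finset.sum_add_distrib]
  refine Finset.sum_congr rfl fun v _ => ?_
  beta_reduce
  rw [Finset.sum_union hd, Finset.sum_union hd]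
  have haS : 0 < ∑ w ∈ S, π w * P w c v :=
    Finset.sum_pos (fun w _ => mul_pos (hπpos w) (hPpos w c v)) hS
  have haT : 0 < ∑ w ∈ T, π w * P w c v :=
    Finset.sum_pos (fun w _ => mul_pos (hπpos w) (hPpos w c v)) hT
  set a := ∑ w ∈ S, π w * P w c v
  set b := ∑ w ∈ T, π w * P w c v
  have hmix : MS / (MS + MT) * (a / MS) + MT / (MS + MT) * (b / MT) = (a + b) / (MS + MT) := by
    field_simp
  rw [hmix]
  have l1 : Real.log ((a + b) / (MS + MT)) = Real.log (a + b) - Real.log (MS + MT) :=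
    Real.log_div (by positivity) (by positivity)
  have l2 : Real.log (a / MS) = Real.log a - Real.log MS :=
    Real.log_div (by positivity) (by positivity)
  have l3 : Real.log (b / MT) = Real.log b - Real.log MT :=
    Real.log_div (by positivity) (by positivity)
  have l4 : Real.log (a / MS / ((a + b) / (MS + MT)))
      = Real.log a - Real.log MS - (Real.log (a + b) - Real.log (MS + MT)) := by
    rw [Real.log_div (by positivity) (by positivity), l2, l1]
  have l5 : Real.log (b / MT / ((a + b) / (MS + MT)))
      = Real.log b - Real.log MT - (Real.log (a + b) - Real.log (MS + MT)) := by
    rw [Real.log_div (by positivity) (by positivity), l3, l1]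
  rw [l1, l2, l3, l4, l5]
  rw [show (∑ w ∈ S, π w) = MS from rfl, show (∑ w ∈ T, π w) = MT from rfl]
  field_simp
  ring

lemma negMulLog_add_le (x y : ℝ) (hx : 0 ≤ x) (hy : 0 ≤ y) :
    Real.negMulLog (x + y) ≤ Real.negMulLog x + Real.negMulLog y := by
  unfold Real.negMulLog
  have h1 : x * Real.log x ≤ x * Real.log (x + y) := by
    rcases eq_or_lt_of_le hx with h | h
    · simp [← h]
    · exact mul_le_mul_of_nonneg_left (Real.log_le_log h (by linarith)) hx
  have h2 : y * Real.log y ≤ y * Real.log (x + y) := by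
    rcases eq_or_lt_of_le hy with h | h
    · simp [← h]
    · exact mul_le_mul_of_nonneg_left (Real.log_le_log h (by linarith)) hy
  nlinarith [h1, h2]

lemma negMulLog_merge (MS MT : ℝ) (hS : 0 < MS) (hT : 0 < MT) :
    Real.negMulLog MS + Real.negMulLog MT
      = Real.negMulLog (MS + MT) + (MS + MT) * binEnt (MS / (MS + MT)) := by
  have hM : 0 < MS + MT := by positivity
  have h1l : 1 - MS / (MS + MT) = MT / (MS + MT) := by field_simp; ring
  unfold binEnt Real.negMulLog
  rw [h1l, Real.log_div (by positivity) (by positivity),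
    Real.log_div (by positivity) (by positivity)]
  field_simp
  ring

lemma sum_sub_two {X : Type} [Fintype X] [DecidableEq X] (f g : X → ℝ) (a b : X)
    (hab : a ≠ b) (h : ∀ x, x ≠ a → x ≠ b → f x = g x) :
    ∑ x, f x = ∑ x, g x + (f a + f b - (g a + g b)) := by
  have : ∑ x, (f x - g x) = ∑ x ∈ ({a, b} : Finset X), (f x - g x) := by
    refine (Finset.sum_subset (Finset.subset_univ _) fun x _ hx => ?_).symm
    simp only [Finset.mem_insert, Finset.mem_singleton, not_or] at hx
    rw [h x hx.1 hx.2, sub_self]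
  rw [Finset.sum_pair hab] at this
  have h2 : ∑ x, (f x - g x) = ∑ x, f x - ∑ x, g x := Finset.sum_sub_distrib f g
  linarith
end Helpers

section Main
variable {W C V : Type} [Fintype W] [DecidableEq W] [Fintype C] [Fintype V]

lemma bayesOptLoss_eq' {X : Type} [Fintype X] [DecidableEq X]
    (π : W → ℝ) (DC : C → ℝ) (P : W → C → V → ℝ) (p : W → X) :
    bayesOptLoss π DC P p
      = ∑ c, DC c * ∑ x, cellLoss π P (Finset.univ.filter fun w => p w = x) c := rfl

end Main

/-- local stability of the minimum-complexity veridical partition: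
for the quotient encoding `p*` by the ecology equivalence `∼_μ` (same token laws on all
contexts of positive `D_C`-mass), every one-step split leaves the Bayes-optimal loss
unchanged and weakly increases `J_β`; and `p*` is a local minimum of `J_β` with respect
to one-step splits and merges iff for every pair of distinct classes the merge cost
`β h(λ)` is at most the expected Jensen–Shannon gain (i.e. `β ≤ β_min`). -/
theorem veridical_partition_local_min {W C V : Type}
    [Fintype W] [DecidableEq W] [Fintype C] [Fintype V]
    (π : W → ℝ) (DC : C → ℝ) (P : W → C → V → ℝ) (β : ℝ) (hβ : 0 ≤ β)
    (hπpos : ∀ w, 0 < π w) (hπsum : ∑ w, π w = 1)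
    (hDCnn : ∀ c, 0 ≤ DC c) (hDCsum : ∑ c, DC c = 1)
    (hPpos : ∀ w c v, 0 < P w c v) (hPsum : ∀ w c, ∑ v, P w c v = 1)
    (s : Setoid W) [DecidableEq (Quotient s)] [Fintype (Quotient s)]
    (hs : ∀ w₁ w₂, s.r w₁ w₂ ↔ ∀ c, 0 < DC c → P w₁ c = P w₂ c) :
    (∀ (x₀ : Quotient s) (A B : Finset W), A.Nonempty → B.Nonempty → Disjoint A B →
      A ∪ B = cls s x₀ →
        bayesOptLoss π DC P (fun w => (Quotient.mk s w, decide (w ∈ A)))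
          = bayesOptLoss π DC P (Quotient.mk s) ∧
        Jreg π DC P β (Quotient.mk s)
          ≤ Jreg π DC P β (fun w => (Quotient.mk s w, decide (w ∈ A)))) ∧
    (((∀ (x₀ : Quotient s) (A B : Finset W), A.Nonempty → B.Nonempty → Disjoint A B →
        A ∪ B = cls s x₀ →
          Jreg π DC P β (Quotient.mk s)
            ≤ Jreg π DC P β (fun w => (Quotient.mk s w, decide (w ∈ A)))) ∧
      (∀ x₁ x₂ : Quotient s, x₁ ≠ x₂ →
          Jreg π DC P β (Quotient.mk s)
            ≤ Jreg π DC P β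
                (fun w => if Quotient.mk s w = x₂ then x₁ else Quotient.mk s w))) ↔
      (∀ x₁ x₂ : Quotient s, x₁ ≠ x₂ →
        β * binEnt ((∑ w ∈ cls s x₁, π w) / ((∑ w ∈ cls s x₁, π w) + ∑ w ∈ cls s x₂, π w))
          ≤ ∑ c, DC c *
              js2 ((∑ w ∈ cls s x₁, π w) / ((∑ w ∈ cls s x₁, π w) + ∑ w ∈ cls s x₂, π w))
                (avgOn π P (cls s x₁) c) (avgOn π P (cls s x₂) c))) := by
  have hcls : ∀ x : Quotient s,
      (Finset.univ.filter fun w => Quotient.mk s w = x) = cls s x := fun _ => rfl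
  have hclsmem : ∀ x (w : W), w ∈ cls s x ↔ Quotient.mk s w = x := by
    intro x w; simp [cls]
  have hclsne : ∀ x : Quotient s, (cls s x).Nonempty := by
    intro x
    obtain ⟨w, hw⟩ := Quotient.exists_rep x
    exact ⟨w, (hclsmem x w).mpr hw⟩
  have hMass : ∀ x : Quotient s, 0 < ∑ w ∈ cls s x, π w :=
    fun x => Finset.sum_pos (fun w _ => hπpos w) (hclsne x)
  -- the split part
  have hsplit : ∀ (x₀ : Quotient s) (A B : Finset W), A.Nonempty → B.Nonempty →
      Disjoint A B → A ∪ B = cls s x₀ →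
        bayesOptLoss π DC P (fun w => (Quotient.mk s w, decide (w ∈ A)))
          = bayesOptLoss π DC P (Quotient.mk s) ∧
        Jreg π DC P β (Quotient.mk s)
          ≤ Jreg π DC P β (fun w => (Quotient.mk s w, decide (w ∈ A))) := by
    intro x₀ A B hA hB hd hAB
    have hAsub : ∀ w ∈ A, Quotient.mk s w = x₀ := fun w hw =>
      (hclsmem x₀ w).mp (hAB ▸ Finset.mem_union_left B hw)
    have hBsub : ∀ w ∈ B, Quotient.mk s w = x₀ := fun w hw =>
      (hclsmem x₀ w).mp (hAB ▸ Finset.mem_union_right A hw)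
    have hcT : ∀ x : Quotient s,
        (Finset.univ.filter fun w =>
          ((Quotient.mk s w, decide (w ∈ A)) : Quotient s × Bool) = (x, true))
          = if x = x₀ then A else ∅ := by
      intro x; ext w
      simp only [Finset.mem_filter, Finset.mem_univ, true_and, Prod.mk.injEq,
        decide_eq_true_eq]
      split_ifs with hx
      · exact ⟨fun h => h.2, fun hw => ⟨(hAsub w hw).trans hx.symm, hw⟩⟩
      · simp only [Finset.notMem_empty, iff_false, not_and]
        intro h1 h2
        exact hx (h1.symm.trans (hAsub w h2))
    have hcF : ∀ x : Quotient s,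
        (Finset.univ.filter fun w =>
          ((Quotient.mk s w, decide (w ∈ A)) : Quotient s × Bool) = (x, false))
          = if x = x₀ then B else cls s x := by
      intro x; ext w
      simp only [Finset.mem_filter, Finset.mem_univ, true_and, Prod.mk.injEq,
        decide_eq_false_iff_not]
      split_ifs with hx
      · constructor
        · rintro ⟨h1, h2⟩
          have : w ∈ A ∪ B := hAB ▸ (hclsmem x₀ w).mpr (h1.trans hx)
          rcases Finset.mem_union.mp this with h | h
          · exact absurd h h2
          · exact h
        · intro hw
          exact ⟨(hBsub w hw).trans hx.symm,
            fun hwA => (Finset.disjoint_left.mp hd hwA) hw⟩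
      · constructor
        · rintro ⟨h1, _⟩; exact (hclsmem x w).mpr h1
        · intro hw
          refine ⟨(hclsmem x w).mp hw, fun hwA => hx ?_⟩
          rw [← (hclsmem x w).mp hw, hAsub w hwA]
    -- loss equality
    have hLoss : bayesOptLoss π DC P (fun w => (Quotient.mk s w, decide (w ∈ A)))
        = bayesOptLoss π DC P (Quotient.mk s) := by
      rw [bayesOptLoss_eq', bayesOptLoss_eq']
      refine Finset.sum_congr rfl fun c _ => ?_
      rcases eq_or_lt_of_le (hDCnn c) with hc | hc
      · rw [← hc]; ring
      congr 1
      rw [Fintype.sum_prod_type]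
      refine Finset.sum_congr rfl fun x _ => ?_
      rw [Fintype.sum_bool, hcT x, hcF x, hcls x]
      by_cases hx : x = x₀
      · rw [if_pos hx, if_pos hx, hx, ← hAB]
        obtain ⟨w₀, hw₀⟩ := id hA
        refine cellLoss_split π P hπpos A B hA hB hd c (P w₀ c) (fun w hw => ?_)
        have hr : s.r w w₀ := Quotient.exact (by
          rw [hAsub w₀ hw₀]
          rw [hAB] at hw
          exact (hclsmem x₀ w).mp hw)
        exact (hs w w₀).mp hr c hc
      · rw [if_neg hx, if_neg hx, cellLoss_empty, zero_add]
    -- entropy inequality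
    have hEnt : partitionEntropy π (Quotient.mk s)
        ≤ partitionEntropy π (fun w => (Quotient.mk s w, decide (w ∈ A))) := by
      unfold partitionEntropy
      rw [Fintype.sum_prod_type]
      refine Finset.sum_le_sum fun x _ => ?_
      rw [Fintype.sum_bool, hcT x, hcF x, hcls x]
      by_cases hx : x = x₀
      · rw [if_pos hx, if_pos hx, hx, ← hAB, Finset.sum_union hd]
        exact negMulLog_add_le _ _
          (Finset.sum_nonneg fun w _ => (hπpos w).le)
          (Finset.sum_nonneg fun w _ => (hπpos w).le)
      · rw [if_neg hx, if_neg hx]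
        simp [Real.negMulLog_zero]
    refine ⟨hLoss, ?_⟩
    unfold Jreg
    rw [hLoss]
    exact add_le_add_right (mul_le_mul_of_nonneg_left hEnt hβ) _
  -- the merge identity
  have hdisj : ∀ x₁ x₂ : Quotient s, x₁ ≠ x₂ → Disjoint (cls s x₁) (cls s x₂) := by
    intro x₁ x₂ hne
    rw [Finset.disjoint_left]
    intro w h1 h2
    exact hne (((hclsmem x₁ w).mp h1) ▸ ((hclsmem x₂ w).mp h2))
  have hmergeJ : ∀ x₁ x₂ : Quotient s, x₁ ≠ x₂ →
      Jreg π DC P β (fun w => if Quotient.mk s w = x₂ then x₁ else Quotient.mk s w)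
        = Jreg π DC P β (Quotient.mk s)
          + ((∑ w ∈ cls s x₁, π w) + ∑ w ∈ cls s x₂, π w)
            * ((∑ c, DC c *
                js2 ((∑ w ∈ cls s x₁, π w) / ((∑ w ∈ cls s x₁, π w) + ∑ w ∈ cls s x₂, π w))
                  (avgOn π P (cls s x₁) c) (avgOn π P (cls s x₂) c))
              - β * binEnt ((∑ w ∈ cls s x₁, π w)
                  / ((∑ w ∈ cls s x₁, π w) + ∑ w ∈ cls s x₂, π w))) := by
    intro x₁ x₂ hne
    have hcM : ∀ x : Quotient s,
        (Finset.univ.filter fun w =>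
          (if Quotient.mk s w = x₂ then x₁ else Quotient.mk s w) = x)
          = if x = x₁ then cls s x₁ ∪ cls s x₂ else if x = x₂ then ∅ else cls s x := by
      intro x; ext w
      simp only [Finset.mem_filter, Finset.mem_univ, true_and, Finset.mem_union]
      by_cases hw : Quotient.mk s w = x₂
      · rw [if_pos hw]
        split_ifs with h1 h2
        · exact iff_of_true h1.symm (Finset.mem_union.mpr (Or.inr ((hclsmem x₂ w).mpr hw)))
        · exact iff_of_false (fun h => hne (h.trans h2)) (Finset.notMem_empty w)
        · refine iff_of_false (fun h => h1 h.symm) (fun h => h2 ?_)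
          exact ((hclsmem x w).mp h).symm.trans hw
      · rw [if_neg hw]
        split_ifs with h1 h2
        · constructor
          · intro h; exact Finset.mem_union.mpr (Or.inl ((hclsmem x₁ w).mpr (h.trans h1)))
          · intro h
            rcases Finset.mem_union.mp h with h | h
            · exact ((hclsmem x₁ w).mp h).trans h1.symm
            · exact absurd ((hclsmem x₂ w).mp h) hw
        · exact iff_of_false (fun h => hw (h.trans h2)) (Finset.notMem_empty w)
        · exact (hclsmem x w).symm
    have hLossM : bayesOptLoss π DC P
        (fun w => if Quotient.mk s w = x₂ then x₁ else Quotient.mk s w)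
        = bayesOptLoss π DC P (Quotient.mk s)
          + ((∑ w ∈ cls s x₁, π w) + ∑ w ∈ cls s x₂, π w)
            * ∑ c, DC c *
              js2 ((∑ w ∈ cls s x₁, π w) / ((∑ w ∈ cls s x₁, π w) + ∑ w ∈ cls s x₂, π w))
                (avgOn π P (cls s x₁) c) (avgOn π P (cls s x₂) c) := by
      rw [bayesOptLoss_eq', bayesOptLoss_eq', Finset.mul_sum, ← Finset.sum_add_distrib]
      refine Finset.sum_congr rfl fun c _ => ?_
      have hinner : ∑ x, cellLoss π P
            (Finset.univ.filter fun w =>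
              (if Quotient.mk s w = x₂ then x₁ else Quotient.mk s w) = x) c
          = (∑ x, cellLoss π P (Finset.univ.filter fun w => Quotient.mk s w = x) c)
            + ((∑ w ∈ cls s x₁, π w) + ∑ w ∈ cls s x₂, π w)
              * js2 ((∑ w ∈ cls s x₁, π w) / ((∑ w ∈ cls s x₁, π w) + ∑ w ∈ cls s x₂, π w))
                (avgOn π P (cls s x₁) c) (avgOn π P (cls s x₂) c) := by
        rw [sum_sub_two
          (fun x => cellLoss π P
            (Finset.univ.filter fun w =>
              (if Quotient.mk s w = x₂ then x₁ else Quotient.mk s w) = x) c)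
          (fun x => cellLoss π P (Finset.univ.filter fun w => Quotient.mk s w = x) c)
          x₁ x₂ hne ?_]
        · have e1 : (Finset.univ.filter fun w =>
              (if Quotient.mk s w = x₂ then x₁ else Quotient.mk s w) = x₁)
                = cls s x₁ ∪ cls s x₂ := by rw [hcM x₁, if_pos rfl]
          have e2 : (Finset.univ.filter fun w =>
              (if Quotient.mk s w = x₂ then x₁ else Quotient.mk s w) = x₂)
                = ∅ := by rw [hcM x₂, if_neg (Ne.symm hne), if_pos rfl]
          rw [e1, e2, cellLoss_empty, hcls x₁, hcls x₂,
            cellLoss_merge π P hπpos hPpos _ _ (hclsne x₁) (hclsne x₂) (hdisj x₁ x₂ hne) c]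
          ring
        · intro x hx1 hx2
          beta_reduce
          rw [hcM x, if_neg hx1, if_neg hx2, hcls x]
      rw [hinner]; ring
    have hEntM : partitionEntropy π
        (fun w => if Quotient.mk s w = x₂ then x₁ else Quotient.mk s w)
        = partitionEntropy π (Quotient.mk s)
          - ((∑ w ∈ cls s x₁, π w) + ∑ w ∈ cls s x₂, π w)
            * binEnt ((∑ w ∈ cls s x₁, π w)
                / ((∑ w ∈ cls s x₁, π w) + ∑ w ∈ cls s x₂, π w)) := by
      unfold partitionEntropy
      rw [sum_sub_two
        (fun x => Real.negMulLog (∑ w ∈ Finset.univ.filter fun w =>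
          (if Quotient.mk s w = x₂ then x₁ else Quotient.mk s w) = x, π w))
        (fun x => Real.negMulLog (∑ w ∈ Finset.univ.filter
          fun w => Quotient.mk s w = x, π w))
        x₁ x₂ hne ?_]
      · have e1 : (Finset.univ.filter fun w =>
            (if Quotient.mk s w = x₂ then x₁ else Quotient.mk s w) = x₁)
              = cls s x₁ ∪ cls s x₂ := by rw [hcM x₁, if_pos rfl]
        have e2 : (Finset.univ.filter fun w =>
            (if Quotient.mk s w = x₂ then x₁ else Quotient.mk s w) = x₂)
              = ∅ := by rw [hcM x₂, if_neg (Ne.symm hne), if_pos rfl]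
        rw [e1, e2, hcls x₁, hcls x₂,
          Finset.sum_union (hdisj x₁ x₂ hne), Finset.sum_empty, Real.negMulLog_zero,
          negMulLog_merge _ _ (hMass x₁) (hMass x₂)]
        ring
      · intro x hx1 hx2
        beta_reduce
        rw [hcM x, if_neg hx1, if_neg hx2, hcls x]
    unfold Jreg
    rw [hLossM, hEntM]
    ring
  refine ⟨hsplit, ?_, ?_⟩
  · rintro ⟨-, hmerge⟩ x₁ x₂ hne
    have h := hmerge x₁ x₂ hne
    rw [hmergeJ x₁ x₂ hne] at h
    have hM : 0 < (∑ w ∈ cls s x₁, π w) + ∑ w ∈ cls s x₂, π w := by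
      have := hMass x₁; have := hMass x₂; linarith
    have h0 : 0 ≤ ((∑ w ∈ cls s x₁, π w) + ∑ w ∈ cls s x₂, π w)
        * ((∑ c, DC c *
            js2 ((∑ w ∈ cls s x₁, π w) / ((∑ w ∈ cls s x₁, π w) + ∑ w ∈ cls s x₂, π w))
              (avgOn π P (cls s x₁) c) (avgOn π P (cls s x₂) c))
          - β * binEnt ((∑ w ∈ cls s x₁, π w)
              / ((∑ w ∈ cls s x₁, π w) + ∑ w ∈ cls s x₂, π w))) := by linarith
    have := (mul_nonneg_iff_of_pos_left hM).mp h0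
    linarith
  · intro hcond
    refine ⟨fun x₀ A B hA hB hd hAB => (hsplit x₀ A B hA hB hd hAB).2, ?_⟩
    intro x₁ x₂ hne
    rw [hmergeJ x₁ x₂ hne]
    have h := hcond x₁ x₂ hne
    have hM : 0 < (∑ w ∈ cls s x₁, π w) + ∑ w ∈ cls s x₂, π w := by
      have := hMass x₁; have := hMass x₂; linarith
    nlinarith
end

section
/- Define the rate-distortion function R(I) = min over encodings p with H(p(W)) ≤ I of the excess loss L_D*(p) − H(Y|C,W), for a finite ecology on finite W. Let I* = H(W/∼_μ) be the entropy of the quotient partition by the ecology's equivalence relation. Then R(I) = 0 for all I ≥ I*, and R(I) > 0 for all I < I*. -/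
open Finset

/-! ### Auxiliary lemmas -/

lemma negMulLog_sum_le' {ι : Type*} (t : Finset ι) (a : ι → ℝ) (ha : ∀ i ∈ t, 0 ≤ a i) :
    Real.negMulLog (∑ i ∈ t, a i) ≤ ∑ i ∈ t, Real.negMulLog (a i) := by
  rw [Real.negMulLog, neg_mul, Finset.sum_mul, ← Finset.sum_neg_distrib]
  refine Finset.sum_le_sum fun i hi => ?_
  rw [Real.negMulLog, neg_mul, neg_le_neg_iff]
  rcases eq_or_lt_of_le (ha i hi) with h0 | h0
  · rw [← h0]; simp
  · exact mul_le_mul_of_nonneg_left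
      (Real.log_le_log h0 (Finset.single_le_sum ha hi)) (ha i hi)

lemma gibbs_key' {V : Type*} [Fintype V] {p q : V → ℝ} (hp : ∀ v, 0 < p v)
    (hq : ∀ v, 0 < q v) (v : V) :
    p v - q v ≤ p v * (Real.log (p v) - Real.log (q v)) := by
  have h1 : Real.log (q v / p v) ≤ q v / p v - 1 :=
    Real.log_le_sub_one_of_pos (div_pos (hq v) (hp v))
  have h2 : p v * Real.log (q v / p v) ≤ q v - p v := by
    have h3 := mul_le_mul_of_nonneg_left h1 (hp v).le
    have h4 : p v * (q v / p v) = q v := by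
      rw [mul_comm, div_mul_cancel₀ _ (hp v).ne']
    nlinarith
  rw [Real.log_div (hq v).ne' (hp v).ne'] at h2
  nlinarith

lemma gibbs_nonneg' {V : Type*} [Fintype V] {p q : V → ℝ} (hp : ∀ v, 0 < p v)
    (hq : ∀ v, 0 < q v) (hps : ∑ v, p v = 1) (hqs : ∑ v, q v = 1) :
    0 ≤ ∑ v, p v * (Real.log (p v) - Real.log (q v)) :=
  calc (0:ℝ) = ∑ v, (p v - q v) := by rw [Finset.sum_sub_distrib, hps, hqs]; ring
    _ ≤ _ := Finset.sum_le_sum fun v _ => gibbs_key' hp hq v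

lemma gibbs_pos' {V : Type*} [Fintype V] {p q : V → ℝ} (hp : ∀ v, 0 < p v)
    (hq : ∀ v, 0 < q v) (hps : ∑ v, p v = 1) (hqs : ∑ v, q v = 1) (hne : p ≠ q) :
    0 < ∑ v, p v * (Real.log (p v) - Real.log (q v)) := by
  obtain ⟨v0, hv0⟩ : ∃ v, p v ≠ q v := by
    by_contra h; push_neg at h; exact hne (funext h)
  have hstrict : p v0 - q v0 < p v0 * (Real.log (p v0) - Real.log (q v0)) := by
    have h1 : Real.log (q v0 / p v0) < q v0 / p v0 - 1 :=
      Real.log_lt_sub_one_of_pos (div_pos (hq v0) (hp v0))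
        (by intro h; exact hv0 ((div_eq_one_iff_eq (hp v0).ne').mp h).symm)
    have h2 : p v0 * Real.log (q v0 / p v0) < q v0 - p v0 := by
      have h3 := mul_lt_mul_of_pos_left h1 (hp v0)
      have h4 : p v0 * (q v0 / p v0) = q v0 := by
        rw [mul_comm, div_mul_cancel₀ _ (hp v0).ne']
      nlinarith
    rw [Real.log_div (hq v0).ne' (hp v0).ne'] at h2
    nlinarith
  calc (0:ℝ) = ∑ v, (p v - q v) := by rw [Finset.sum_sub_distrib, hps, hqs]; ring
    _ < _ := Finset.sum_lt_sum (fun v _ => gibbs_key' hp hq v)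
        ⟨v0, Finset.mem_univ v0, hstrict⟩

lemma excess_eq' {W C V X : Type} [Fintype W] [Fintype C] [Fintype V]
    [Fintype X] [DecidableEq X]
    (π : W → ℝ) (DC : C → ℝ) (P : W → C → V → ℝ) (p : W → X) :
    bayesOptLoss π DC P p - condEntYCW π DC P =
      ∑ c, DC c * ∑ x, ∑ w ∈ Finset.univ.filter (fun w => p w = x), π w *
        ∑ v, P w c v * (Real.log (P w c v) -
          Real.log ((∑ w' ∈ Finset.univ.filter (fun w => p w = x), π w' * P w' c v) /
            (∑ w' ∈ Finset.univ.filter (fun w => p w = x), π w'))) := by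
  have hcond : condEntYCW π DC P = ∑ c, DC c * ∑ x,
      ∑ w ∈ Finset.univ.filter (fun w => p w = x),
        π w * (∑ v, -(P w c v * Real.log (P w c v))) := by
    unfold condEntYCW
    rw [Finset.sum_comm]
    refine Finset.sum_congr rfl fun c _ => ?_
    rw [Finset.sum_fiberwise Finset.univ p
      (fun w => π w * (∑ v, -(P w c v * Real.log (P w c v)))), Finset.mul_sum]
    exact Finset.sum_congr rfl fun w _ => by ring
  rw [hcond, bayesOptLoss, ← Finset.sum_sub_distrib]
  refine Finset.sum_congr rfl fun c _ => ?_
  rw [← mul_sub]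
  congr 1
  rw [← Finset.sum_sub_distrib]
  refine Finset.sum_congr rfl fun x _ => ?_
  set t := Finset.univ.filter (fun w => p w = x) with ht
  set S := ∑ w ∈ t, π w with hS
  set M := fun v => ∑ w ∈ t, π w * P w c v with hM
  set L := fun v => Real.log (M v / S) with hL
  calc (∑ v, -(M v * L v)) - ∑ w ∈ t, π w * (∑ v, -(P w c v * Real.log (P w c v)))
      = (∑ w ∈ t, ∑ v, π w * (P w c v * Real.log (P w c v))) - ∑ v, M v * L v := by
        have e1 : ∑ v, -(M v * L v) = -∑ v, M v * L v := Finset.sum_neg_distrib _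
        have e2 : ∑ w ∈ t, π w * (∑ v, -(P w c v * Real.log (P w c v)))
            = -∑ w ∈ t, ∑ v, π w * (P w c v * Real.log (P w c v)) := by
          rw [← Finset.sum_neg_distrib]
          refine Finset.sum_congr rfl fun w _ => ?_
          rw [← Finset.sum_neg_distrib, Finset.mul_sum]
          exact Finset.sum_congr rfl fun v _ => by ring
        rw [e1, e2]; ring
    _ = ∑ w ∈ t, π w * ∑ v, P w c v * (Real.log (P w c v) - L v) := by
        have hswap : ∑ v, M v * L v = ∑ w ∈ t, ∑ v, π w * P w c v * L v := by
          rw [Finset.sum_comm]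
          exact Finset.sum_congr rfl fun v _ => by rw [Finset.sum_mul]
        rw [hswap, ← Finset.sum_sub_distrib]
        refine Finset.sum_congr rfl fun w _ => ?_
        rw [← Finset.sum_sub_distrib, Finset.mul_sum]
        exact Finset.sum_congr rfl fun v _ => by ring

lemma cell_Q' {W V : Type} [Fintype W] [Fintype V]
    (π : W → ℝ) (hπpos : ∀ w, 0 < π w) (Pc : W → V → ℝ) (hPpos : ∀ w v, 0 < Pc w v)
    (hPsum : ∀ w, ∑ v, Pc w v = 1) (t : Finset W) (hne : t.Nonempty) :
    (∀ v, 0 < (∑ w' ∈ t, π w' * Pc w' v) / (∑ w' ∈ t, π w')) ∧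
    (∑ v, (∑ w' ∈ t, π w' * Pc w' v) / (∑ w' ∈ t, π w')) = 1 := by
  have hS : 0 < ∑ w' ∈ t, π w' := Finset.sum_pos (fun w _ => hπpos w) hne
  constructor
  · intro v
    exact div_pos (Finset.sum_pos (fun w _ => mul_pos (hπpos w) (hPpos w v)) hne) hS
  · rw [← Finset.sum_div, Finset.sum_comm]
    have h : ∀ w' ∈ t, ∑ v, π w' * Pc w' v = π w' := fun w' _ => by
      rw [← Finset.mul_sum, hPsum, mul_one]
    rw [Finset.sum_congr rfl h, div_self hS.ne']

lemma partitionEntropy_comp_le' {W X Q : Type} [Fintype W] [Fintype X] [DecidableEq X]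
    [Fintype Q] [DecidableEq Q] (π : W → ℝ) (hπ : ∀ w, 0 ≤ π w) (p : W → X) (f : X → Q) :
    partitionEntropy π (fun w => f (p w)) ≤ partitionEntropy π p := by
  unfold partitionEntropy
  have h1 : ∀ q : Q, ∑ w ∈ Finset.univ.filter (fun w => f (p w) = q), π w
      = ∑ x ∈ Finset.univ.filter (fun x => f x = q),
          ∑ w ∈ Finset.univ.filter (fun w => p w = x), π w := by
    intro q
    rw [← Finset.sum_fiberwise (Finset.univ.filter (fun w => f (p w) = q)) p π,
      Finset.sum_filter]
    refine Finset.sum_congr rfl fun x _ => ?_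
    by_cases hx : f x = q
    · rw [if_pos hx]
      refine Finset.sum_congr ?_ fun _ _ => rfl
      ext w
      simp only [Finset.mem_filter, Finset.mem_univ, true_and]
      exact ⟨fun ⟨_, h2⟩ => h2, fun h2 => ⟨by rw [h2, hx], h2⟩⟩
    · rw [if_neg hx]
      convert Finset.sum_empty
      ext w
      simp only [Finset.mem_filter, Finset.mem_univ, true_and, Finset.notMem_empty,
        iff_false, not_and]
      intro ha hb
      exact hx (hb ▸ ha)
  calc ∑ q, Real.negMulLog (∑ w ∈ Finset.univ.filter (fun w => f (p w) = q), π w)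
      ≤ ∑ q, ∑ x ∈ Finset.univ.filter (fun x => f x = q),
          Real.negMulLog (∑ w ∈ Finset.univ.filter (fun w => p w = x), π w) := by
        refine Finset.sum_le_sum fun q _ => ?_
        rw [h1 q]
        exact negMulLog_sum_le' _ _ fun x _ => Finset.sum_nonneg fun w _ => hπ w
    _ = _ := Finset.sum_fiberwise Finset.univ f _

/-- rate–distortion phase transition: with `I* = H(W/∼_μ)` the entropy
of the quotient by the ecology equivalence, zero excess loss is achievable at every rate
`I ≥ I*` (so `R(I) = 0`), while at any rate `I < I*` every encoding of complexity at most
`I` has strictly positive excess (so `R(I) > 0`). -/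
theorem rate_distortion_phase_transition {W C V : Type}
    [Fintype W] [DecidableEq W] [Fintype C] [Fintype V]
    (π : W → ℝ) (DC : C → ℝ) (P : W → C → V → ℝ)
    (hπpos : ∀ w, 0 < π w) (hπsum : ∑ w, π w = 1)
    (hDCnn : ∀ c, 0 ≤ DC c) (hDCsum : ∑ c, DC c = 1)
    (hPpos : ∀ w c v, 0 < P w c v) (hPsum : ∀ w c, ∑ v, P w c v = 1)
    (s : Setoid W) [DecidableEq (Quotient s)] [Fintype (Quotient s)]
    (hs : ∀ w₁ w₂, s.r w₁ w₂ ↔ ∀ c, 0 < DC c → P w₁ c = P w₂ c) :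
    (∀ I : ℝ, partitionEntropy π (Quotient.mk s) ≤ I →
      ∃ p : W → Quotient s,
        partitionEntropy π p ≤ I ∧
        bayesOptLoss π DC P p - condEntYCW π DC P = 0) ∧
    (∀ I : ℝ, I < partitionEntropy π (Quotient.mk s) →
      ∀ (X : Type) (_ : Fintype X) (_ : DecidableEq X) (p : W → X),
        partitionEntropy π p ≤ I →
        0 < bayesOptLoss π DC P p - condEntYCW π DC P) := by
  constructor
  · intro I hI
    refine ⟨Quotient.mk s, hI, ?_⟩
    rw [excess_eq']
    apply Finset.sum_eq_zero
    intro c _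
    rcases eq_or_lt_of_le (hDCnn c) with hc | hc
    · rw [← hc, zero_mul]
    · rw [mul_eq_zero]
      right
      refine Finset.sum_eq_zero fun x _ => Finset.sum_eq_zero fun w hw => ?_
      rw [mul_eq_zero]
      right
      refine Finset.sum_eq_zero fun v _ => ?_
      have hwx : Quotient.mk s w = x := (Finset.mem_filter.mp hw).2
      have hS : 0 < ∑ w' ∈ Finset.univ.filter (fun w'' => Quotient.mk s w'' = x), π w' :=
        Finset.sum_pos (fun w' _ => hπpos w') ⟨w, hw⟩
      have hMeq : (∑ w' ∈ Finset.univ.filter (fun w'' => Quotient.mk s w'' = x),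
            π w' * P w' c v)
          = (∑ w' ∈ Finset.univ.filter (fun w'' => Quotient.mk s w'' = x), π w')
              * P w c v := by
        rw [Finset.sum_mul]
        refine Finset.sum_congr rfl fun w' hw' => ?_
        have heq : Quotient.mk s w' = Quotient.mk s w :=
          ((Finset.mem_filter.mp hw').2).trans hwx.symm
        have hr : s.r w' w := Quotient.eq.mp heq
        rw [(hs w' w).mp hr c hc]
      have hdiv : (∑ w' ∈ Finset.univ.filter (fun w'' => Quotient.mk s w'' = x), π w')
          * P w c v / (∑ w' ∈ Finset.univ.filter (fun w'' => Quotient.mk s w'' = x), π w')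
          = P w c v := mul_div_cancel_left₀ _ hS.ne'
      rw [hMeq, hdiv, sub_self, mul_zero]
  · intro I hI X _ _ p hpI
    classical
    have hW : Nonempty W := by
      by_contra h
      rw [not_nonempty_iff] at h
      rw [Finset.univ_eq_empty, Finset.sum_empty] at hπsum
      exact absurd hπsum (by norm_num)
    have hnr : ∃ w1 w2, p w1 = p w2 ∧ ¬ s.r w1 w2 := by
      by_contra h
      push_neg at h
      set f : X → Quotient s := fun x =>
        if hx : ∃ w, p w = x then Quotient.mk s hx.choose
        else Quotient.mk s (Classical.arbitrary W) with hf
      have hfp : ∀ w, f (p w) = Quotient.mk s w := by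
        intro w
        have hx : ∃ w', p w' = p w := ⟨w, rfl⟩
        simp only [hf, dif_pos hx]
        exact Quotient.sound (h _ _ hx.choose_spec)
      have hle : partitionEntropy π (Quotient.mk s) ≤ partitionEntropy π p := by
        have h2 := partitionEntropy_comp_le' π (fun w => (hπpos w).le) p f
        have heq : (fun w => f (p w)) = Quotient.mk s := funext hfp
        rwa [heq] at h2
      linarith
    obtain ⟨w1, w2, hp12, hnsr⟩ := hnr
    rw [hs] at hnsr
    push_neg at hnsr
    obtain ⟨c0, hc0, hPne⟩ := hnsr
    rw [excess_eq']
    have hInner : ∀ (c : C) (x : X) (w : W), w ∈ Finset.univ.filter (fun w => p w = x) →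
        0 ≤ ∑ v, P w c v * (Real.log (P w c v) -
          Real.log ((∑ w' ∈ Finset.univ.filter (fun w => p w = x), π w' * P w' c v) /
            (∑ w' ∈ Finset.univ.filter (fun w => p w = x), π w'))) := by
      intro c x w hw
      obtain ⟨hQpos, hQsum⟩ := cell_Q' π hπpos (fun w v => P w c v)
        (fun w v => hPpos w c v) (fun w => hPsum w c) _ ⟨w, hw⟩
      exact gibbs_nonneg' (hPpos w c) hQpos (hPsum w c) hQsum
    have hxnn : ∀ (c : C) (x : X),
        0 ≤ ∑ w ∈ Finset.univ.filter (fun w => p w = x), π w *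
          ∑ v, P w c v * (Real.log (P w c v) -
            Real.log ((∑ w' ∈ Finset.univ.filter (fun w => p w = x), π w' * P w' c v) /
              (∑ w' ∈ Finset.univ.filter (fun w => p w = x), π w'))) := fun c x =>
      Finset.sum_nonneg fun w hw => mul_nonneg (hπpos w).le (hInner c x w hw)
    apply Finset.sum_pos'
    · intro c _
      exact mul_nonneg (hDCnn c) (Finset.sum_nonneg fun x _ => hxnn c x)
    · refine ⟨c0, Finset.mem_univ _, mul_pos hc0 ?_⟩
      apply Finset.sum_pos' (fun x _ => hxnn c0 x)
      refine ⟨p w1, Finset.mem_univ _, ?_⟩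
      have hw1 : w1 ∈ Finset.univ.filter (fun w => p w = p w1) := by simp
      have hw2 : w2 ∈ Finset.univ.filter (fun w => p w = p w1) := by
        simp [hp12.symm]
      have hne12 : w1 ≠ w2 := fun h => hPne (h ▸ rfl)
      set t := Finset.univ.filter (fun w => p w = p w1) with htdef
      set Qf : V → ℝ := fun v => (∑ w' ∈ t, π w' * P w' c0 v) / (∑ w' ∈ t, π w')
        with hQf
      obtain ⟨hQpos, hQsum⟩ := cell_Q' π hπpos (fun w v => P w c0 v)
        (fun w v => hPpos w c0 v) (fun w => hPsum w c0) t ⟨w1, hw1⟩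
      have hcase : P w1 c0 ≠ Qf ∨ P w2 c0 ≠ Qf := by
        by_contra hcc
        push_neg at hcc
        exact hPne (hcc.1.trans hcc.2.symm)
      set KL : W → ℝ := fun w => ∑ v, P w c0 v *
        (Real.log (P w c0 v) - Real.log (Qf v)) with hKL
      have hKLnn : ∀ w ∈ t, 0 ≤ KL w := fun w hw => hInner c0 (p w1) w hw
      have hkey : 0 < π w1 * KL w1 + π w2 * KL w2 := by
        rcases hcase with hc1 | hc1
        · exact add_pos_of_pos_of_nonneg
            (mul_pos (hπpos w1) (gibbs_pos' (hPpos w1 c0) hQpos (hPsum w1 c0) hQsum hc1))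
            (mul_nonneg (hπpos w2).le (hKLnn w2 hw2))
        · exact add_pos_of_nonneg_of_pos
            (mul_nonneg (hπpos w1).le (hKLnn w1 hw1))
            (mul_pos (hπpos w2) (gibbs_pos' (hPpos w2 c0) hQpos (hPsum w2 c0) hQsum hc1))
      calc (0:ℝ) < π w1 * KL w1 + π w2 * KL w2 := hkey
        _ = ∑ w ∈ ({w1, w2} : Finset W), π w * KL w := by rw [Finset.sum_pair hne12]
        _ ≤ ∑ w ∈ t, π w * KL w := by
            refine Finset.sum_le_sum_of_subset_of_nonneg ?_ fun w hw _ =>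
              mul_nonneg (hπpos w).le (hKLnn w hw)
            intro w hw
            simp only [Finset.mem_insert, Finset.mem_singleton] at hw
            rcases hw with h | h
            · exact h ▸ hw1
            · exact h ▸ hw2
end
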